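/- arXiv:1909.04098 — 3 statements merged into one kernel-verified Lean document; each statement's English description precedes it below -/
import Mathlib

section
/- Let n and k be positive integers with k > n/2, and let G be a subgroup of the symmetric group S_n on {1, …, n} whose action on {1, …, n} is transitive. Suppose there exists a subset s ⊆ {1, …, n} of cardinality k such that every permutation of {1, …, n} that fixes each point outside s belongs to G (i.e., G contains a subgroup isomorphic as a permutation group to S_k acting on s and trivially on its complement). Then G = S_n. -/
/-!
Fix `a ∈ s`. For any point `x`, transitivity gives `g ∈ G` with `g a = x`. Since `|s| > n / 2`,
the sets `s` and `g s` meet, say in `y = g b` with `b ∈ s`. Then `swap x y = g (swap a b) g⁻¹`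
and `swap y a` both lie in `G`, hence so does `swap x a`. Thus `G` contains every
transposition, and the transpositions generate `Sₙ`.
-/

open Equiv Finset

namespace Equiv.Perm

variable {α : Type*} [DecidableEq α] {G : Subgroup (Perm α)}

theorem swap_apply_apply_mem {g : Perm α} (hg : g ∈ G) {x y : α} (hxy : swap x y ∈ G) :
    swap (g x) (g y) ∈ G := by
  rw [swap_apply_apply]
  exact G.mul_mem (G.mul_mem hg hxy) (G.inv_mem hg)

theorem swap_mem_of_card_lt_two_mul [Fintype α] (htrans : ∀ i j : α, ∃ σ ∈ G, σ i = j)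
    {s : Finset α} (hs : ∀ x ∈ s, ∀ y ∈ s, swap x y ∈ G)
    (hcard : Fintype.card α < 2 * #s)
    (x y : α) : swap x y ∈ G := by
  obtain ⟨a, ha⟩ : s.Nonempty := card_pos.mp (by omega)
  have swap_mem_left (z : α) : swap z a ∈ G := by
    obtain ⟨g, hg, rfl⟩ := htrans a z
    obtain ⟨c, hc⟩ : (s ∩ s.map g.toEmbedding).Nonempty :=
      inter_nonempty_of_card_lt_card_add_card (subset_univ s) (subset_univ _)
        (by rw [card_map, ← two_mul]; exact hcard)
    obtain ⟨hcs, hcg⟩ := mem_inter.mp hc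
    obtain ⟨b, hb, rfl⟩ := mem_map.mp hcg
    exact SubmonoidClass.swap_mem_trans G (swap_apply_apply_mem hg (hs a ha b hb)) (hs _ hcs a ha)
  exact SubmonoidClass.swap_mem_trans G (swap_mem_left x) (swap_comm a y ▸ swap_mem_left y)

theorem eq_top_of_forall_swap_mem [Finite α] (h : ∀ x y : α, swap x y ∈ G) : G = ⊤ := by
  rw [eq_top_iff, ← closure_isSwap, Subgroup.closure_le]
  rintro σ ⟨x, y, -, rfl⟩
  exact h x y

end Equiv.Perm

theorem stmt_4_general (n k : ℕ) (hkn : n < 2 * k)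
    (G : Subgroup (Equiv.Perm (Fin n)))
    (htrans : ∀ i j : Fin n, ∃ σ ∈ G, σ i = j)
    (s : Finset (Fin n)) (hs : s.card = k)
    (hsub : ∀ σ : Equiv.Perm (Fin n), (∀ i : Fin n, i ∉ s → σ i = i) → σ ∈ G) :
    G = ⊤ := by
  have swap_mem_of_mem (x : Fin n) (hx : x ∈ s) (y : Fin n) (hy : y ∈ s) : swap x y ∈ G :=
    hsub _ fun i hi ↦ swap_apply_of_ne_of_ne (ne_of_mem_of_not_mem hx hi).symm
      (ne_of_mem_of_not_mem hy hi).symm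
  refine Equiv.Perm.eq_top_of_forall_swap_mem
    (Equiv.Perm.swap_mem_of_card_lt_two_mul htrans swap_mem_of_mem ?_)
  rwa [Fintype.card_fin, hs]

theorem stmt_4 (n k : ℕ) (hn : 0 < n) (hk : 0 < k) (hkn : n < 2 * k)
    (G : Subgroup (Equiv.Perm (Fin n)))
    (htrans : ∀ i j : Fin n, ∃ σ ∈ G, σ i = j)
    (s : Finset (Fin n)) (hs : s.card = k)
    (hsub : ∀ σ : Equiv.Perm (Fin n), (∀ i : Fin n, i ∉ s → σ i = i) → σ ∈ G) :
    G = ⊤ :=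
  stmt_4_general n k hkn G htrans s hs hsub
end

section
/- Let n ≥ 2 and let G be a transitive subgroup of the symmetric group S_n on {1, …, n}. If G contains a transposition and a cycle of length p for some prime p with p > n/2, then G = S_n. -/
/-!
By Jordan's theorem (`subgroup_eq_top_of_isPreprimitive_of_isSwap_mem`) a primitive permutation
group containing a transposition is the whole symmetric group, so it suffices to show that `G` is
primitive. Let `B` be a block and `σ` the `p`-cycle. Since `σ ^ p = 1`, the translates `σ ^ i • B`
either all coincide or are `p` distinct blocks. In the second case `B` has at least `p` disjoint
translates among `n < 2p` points, so it is a singleton; in the first case `B` contains the support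
of `σ`, so `|B| ≥ p > n / 2`, and a block of more than half the points is everything.
-/

open Equiv Equiv.Perm MulAction Subgroup Function
open scoped Pointwise

theorem MulAction.minimalPeriod_le_ncard_orbit {G X : Type*} [Group G] [MulAction G X]
    (g : G) (x : X) [Finite (orbit G x)] :
    minimalPeriod (g • ·) x ≤ (orbit G x).ncard := by
  have : Finite (orbit (zpowers g) x) :=
    Finite.Set.subset _ (orbit_subgroup_subset (zpowers g) x)
  have := Fintype.ofFinite (orbit (zpowers g) x)
  rw [minimalPeriod_eq_card, ← Nat.card_eq_fintype_card, Nat.card_coe_set_eq]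
  exact Set.ncard_le_ncard (orbit_subgroup_subset _ x) (Set.toFinite _)

theorem MulAction.IsBlock.mem_stabilizer_or_subsingleton {G X : Type*} [Group G] [MulAction G X]
    [Finite X] [IsPretransitive G X] {B : Set X} (hB : IsBlock G B) {g : G} {p : ℕ}
    (hp : p.Prime) (hg : g ^ p = 1) (hX : Nat.card X < 2 * p) :
    g ∈ stabilizer G B ∨ B.Subsingleton := by
  have hper : minimalPeriod (g • ·) B ∣ p := by
    rw [← pow_smul_eq_iff_minimalPeriod_dvd, hg, one_smul]
  rcases (Nat.dvd_prime hp).mp hper with h1 | hpB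
  · exact .inl (minimalPeriod_eq_one_iff_isFixedPt.mp h1)
  · refine .inr (hB.subsingleton_of_card_lt ?_)
    have := minimalPeriod_le_ncard_orbit g B
    omega

theorem Equiv.Perm.IsCycle.support_subset_of_mem_stabilizer {α : Type*} [Fintype α]
    [DecidableEq α] {σ : Perm α} (hσ : σ.IsCycle) {B : Set α}
    (hσB : σ ∈ stabilizer (Perm α) B) {a : α} (ha : a ∈ σ.support) (haB : a ∈ B) :
    (σ.support : Set α) ⊆ B := by
  intro y hy
  obtain ⟨k, rfl⟩ := hσ.exists_pow_eq (mem_support.mp ha) (mem_support.mp hy)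
  rw [← (stabilizer (Perm α) B).pow_mem hσB k]
  exact Set.smul_mem_smul_set haB

theorem Equiv.Perm.isPreprimitive_of_isCycle_mem {α : Type*} [Fintype α] [DecidableEq α]
    (G : Subgroup (Perm α)) [IsPretransitive G α] {σ : Perm α} (hσG : σ ∈ G)
    (hσ : σ.IsCycle) (hσp : σ.support.card.Prime) (hα : Nat.card α < 2 * σ.support.card) :
    IsPreprimitive G α := by
  obtain ⟨a, ha⟩ := hσ.nonempty_support
  refine .of_isTrivialBlock_base a fun {B} haB hB ↦ ?_
  have hσ_pow : (⟨σ, hσG⟩ : G) ^ σ.support.card = 1 := by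
    rw [← hσ.orderOf, ← orderOf_mk σ hσG]
    exact pow_orderOf_eq_one _
  rcases hB.mem_stabilizer_or_subsingleton hσp hσ_pow hα with hstab | hsub
  · refine .inr (hB.eq_univ_of_card_lt ?_)
    have hsupp := hσ.support_subset_of_mem_stabilizer hstab ha haB
    have := Set.ncard_le_ncard hsupp (Set.toFinite B)
    rw [Set.ncard_coe_finset] at this
    omega
  · exact .inl hsub

theorem stmt_6_general (n : ℕ) (p : ℕ) (hp : p.Prime) (hpn : n < 2 * p)
    (G : Subgroup (Equiv.Perm (Fin n)))
    (htrans : ∀ i j : Fin n, ∃ σ ∈ G, σ i = j)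
    (hswap : ∃ τ ∈ G, τ.IsSwap)
    (hcycle : ∃ σ ∈ G, σ.IsCycle ∧ σ.support.card = p) :
    G = ⊤ := by
  obtain ⟨τ, hτG, hτ⟩ := hswap
  obtain ⟨σ, hσG, hσ, rfl⟩ := hcycle
  have : IsPretransitive G (Fin n) :=
    ⟨fun i j ↦ let ⟨g, hg, hgij⟩ := htrans i j; ⟨⟨g, hg⟩, hgij⟩⟩
  have hprim := isPreprimitive_of_isCycle_mem G hσG hσ hp (by simpa using hpn)
  exact subgroup_eq_top_of_isPreprimitive_of_isSwap_mem hprim τ hτ hτG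

theorem stmt_6 (n : ℕ) (hn : 2 ≤ n) (p : ℕ) (hp : p.Prime) (hpn : n < 2 * p)
    (G : Subgroup (Equiv.Perm (Fin n)))
    (htrans : ∀ i j : Fin n, ∃ σ ∈ G, σ i = j)
    (hswap : ∃ τ ∈ G, τ.IsSwap)
    (hcycle : ∃ σ ∈ G, σ.IsCycle ∧ σ.support.card = p) :
    G = ⊤ :=
  stmt_6_general n p hp hpn G htrans hswap hcycle
end

section
/- Let n ≥ 4 and let G be a transitive subgroup of the symmetric group S_n on {1, …, n}. If G contains a transposition, a 3-cycle, and a cycle of length n−2, then G = S_n. -/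
open Equiv Equiv.Perm Finset

namespace Stmt7Aux

variable {n : ℕ}

/-- The relation: equal, or the swap is in `G`. -/
def rel (G : Subgroup (Equiv.Perm (Fin n))) (x y : Fin n) : Prop :=
  x = y ∨ Equiv.swap x y ∈ G

theorem rel_refl (G : Subgroup (Equiv.Perm (Fin n))) (x : Fin n) : rel G x x := Or.inl rfl

theorem rel_symm {G : Subgroup (Equiv.Perm (Fin n))} {x y : Fin n} (h : rel G x y) :
    rel G y x := by
  rcases h with rfl | h
  · exact Or.inl rfl
  · exact Or.inr (by rwa [Equiv.swap_comm])

theorem rel_trans {G : Subgroup (Equiv.Perm (Fin n))} {x y z : Fin n}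
    (h1 : rel G x y) (h2 : rel G y z) : rel G x z := by
  rcases h1 with rfl | h1
  · exact h2
  rcases h2 with rfl | h2
  · exact Or.inr h1
  rcases eq_or_ne x z with rfl | hxz
  · exact Or.inl rfl
  · exact Or.inr (SubmonoidClass.swap_mem_trans G h1 h2)

theorem rel_apply {G : Subgroup (Equiv.Perm (Fin n))} {g : Equiv.Perm (Fin n)} (hg : g ∈ G)
    {x y : Fin n} (h : rel G x y) : rel G (g x) (g y) := by
  rcases h with rfl | h
  · exact Or.inl rfl
  · refine Or.inr ?_
    rw [Equiv.swap_apply_apply]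
    exact G.mul_mem (G.mul_mem hg h) (G.inv_mem hg)

/-- The `rel`-class of a point, as a finset. -/
noncomputable def cl (G : Subgroup (Equiv.Perm (Fin n))) (x : Fin n) : Finset (Fin n) :=
  @Finset.filter _ (rel G x) (Classical.decPred _) Finset.univ

theorem mem_cl {G : Subgroup (Equiv.Perm (Fin n))} {x y : Fin n} :
    y ∈ cl G x ↔ rel G x y := by
  simp [cl]

theorem cl_image {G : Subgroup (Equiv.Perm (Fin n))} {g : Equiv.Perm (Fin n)} (hg : g ∈ G)
    (x : Fin n) : (cl G x).image g = cl G (g x) := by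
  ext z
  simp only [Finset.mem_image, mem_cl]
  constructor
  · rintro ⟨w, hw, rfl⟩
    exact rel_apply hg hw
  · intro hz
    refine ⟨g⁻¹ z, ?_, by simp⟩
    have := rel_apply (G.inv_mem hg) hz
    simpa using this

theorem card_cl_const {G : Subgroup (Equiv.Perm (Fin n))}
    (htrans : ∀ i j : Fin n, ∃ σ ∈ G, σ i = j) (x y : Fin n) :
    (cl G x).card = (cl G y).card := by
  obtain ⟨g, hg, hgx⟩ := htrans x y
  rw [← hgx, ← cl_image hg, Finset.card_image_of_injective _ g.injective]

end Stmt7Aux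

open Stmt7Aux

theorem stmt_7 (n : ℕ) (hn : 4 ≤ n)
    (G : Subgroup (Equiv.Perm (Fin n)))
    (htrans : ∀ i j : Fin n, ∃ σ ∈ G, σ i = j)
    (hswap : ∃ τ ∈ G, τ.IsSwap)
    (h3cycle : ∃ μ ∈ G, μ.IsCycle ∧ μ.support.card = 3)
    (hcycle : ∃ σ ∈ G, σ.IsCycle ∧ σ.support.card = n - 2) :
    G = ⊤ := by
  obtain ⟨τ, hτG, a, b, hab, rfl⟩ := hswap
  obtain ⟨μ, hμG, hμc, hμ3⟩ := h3cycle
  obtain ⟨σ, hσG, hσc, hσs⟩ := hcycle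
  -- every class has at least 2 elements
  have hd2 : ∀ x : Fin n, 2 ≤ (cl G x).card := by
    intro x
    rw [card_cl_const htrans x a]
    have hsub : ({a, b} : Finset (Fin n)) ⊆ cl G a := by
      intro z hz
      rw [Finset.mem_insert, Finset.mem_singleton] at hz
      rcases hz with rfl | rfl
      · exact mem_cl.2 (rel_refl G z)
      · exact mem_cl.2 (Or.inr hτG)
    calc 2 = ({a, b} : Finset (Fin n)).card := (Finset.card_pair hab).symm
      _ ≤ _ := Finset.card_le_card hsub
  -- a class containing 3 distinct pairwise related points contradicts all classes having card 2
  -- small classes are impossible, thanks to the 3-cycle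
  have hB : ∀ x0 : Fin n, (cl G x0).card ≤ 2 → False := by
    intro x0 hx0
    have hall : ∀ z : Fin n, (cl G z).card = 2 := fun z => le_antisymm
      (by rw [card_cl_const htrans z x0]; exact hx0) (hd2 z)
    have key : ∀ z1 z2 z3 : Fin n, z2 ≠ z1 → z3 ≠ z1 → z3 ≠ z2 →
        rel G z1 z2 → rel G z1 z3 → False := by
      intro z1 z2 z3 h21 h31 h32 hr2 hr3
      have hsub : ({z1, z2, z3} : Finset (Fin n)) ⊆ cl G z1 := by
        intro w hw
        simp only [Finset.mem_insert, Finset.mem_singleton] at hw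
        rcases hw with rfl | rfl | rfl
        · exact mem_cl.2 (rel_refl G w)
        · exact mem_cl.2 hr2
        · exact mem_cl.2 hr3
      have hcard3 : ({z1, z2, z3} : Finset (Fin n)).card = 3 := by
        rw [Finset.card_insert_of_notMem (by simp [Ne.symm h21, Ne.symm h31]),
          Finset.card_pair (Ne.symm h32)]
      have h3le : 3 ≤ (cl G z1).card := hcard3 ▸ Finset.card_le_card hsub
      rw [hall z1] at h3le
      omega
    -- pick a point moved by μ
    have hsupp : μ.support.Nonempty := Finset.card_pos.mp (by rw [hμ3]; norm_num)
    obtain ⟨x, hx⟩ := hsupp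
    have hμx : μ x ≠ x := Equiv.Perm.mem_support.mp hx
    have hord : orderOf μ = 3 := by rw [hμc.orderOf, hμ3]
    have h3app : μ (μ (μ x)) = x := by
      have hμ3pow : μ ^ 3 = 1 := by rw [← hord]; exact pow_orderOf_eq_one μ
      have := congrArg (fun f : Equiv.Perm (Fin n) => f x) hμ3pow
      simpa [pow_succ, Equiv.Perm.mul_apply] using this
    have hμ2x : μ (μ x) ≠ x := by
      intro h
      rw [h] at h3app
      exact hμx h3app
    have hμ2μ : μ (μ x) ≠ μ x := fun h => hμx (μ.injective h)
    -- the support of μ is exactly {x, μ x, μ (μ x)}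
    have hsup_eq : μ.support = {x, μ x, μ (μ x)} := by
      have hsub : ({x, μ x, μ (μ x)} : Finset (Fin n)) ⊆ μ.support := by
        intro w hw
        simp only [Finset.mem_insert, Finset.mem_singleton] at hw
        rcases hw with rfl | rfl | rfl
        · exact hx
        · exact Equiv.Perm.apply_mem_support.2 hx
        · exact Equiv.Perm.apply_mem_support.2 (Equiv.Perm.apply_mem_support.2 hx)
      have hcard3 : ({x, μ x, μ (μ x)} : Finset (Fin n)).card = 3 := by
        rw [Finset.card_insert_of_notMem (by simp [Ne.symm hμx, Ne.symm hμ2x]),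
          Finset.card_pair (Ne.symm hμ2μ)]
      exact (Finset.eq_of_subset_of_card_le hsub (by rw [hμ3, hcard3])).symm
    -- partner of x
    obtain ⟨c, d, hcd, hcld⟩ := Finset.card_eq_two.mp (hall x)
    have hxmem : x ∈ cl G x := mem_cl.2 (rel_refl G x)
    have hy : ∃ y, y ≠ x ∧ rel G x y := by
      rw [hcld] at hxmem
      rcases Finset.mem_insert.mp hxmem with rfl | h
      · exact ⟨d, fun h => hcd h.symm, mem_cl.1 (by rw [hcld]; simp)⟩
      · rw [Finset.mem_singleton] at h
        subst h
        exact ⟨c, fun h => hcd h, mem_cl.1 (by rw [hcld]; simp)⟩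
    obtain ⟨y, hyx, hxy⟩ := hy
    by_cases hy1 : y = μ x
    · subst hy1
      have h2 : rel G (μ x) (μ (μ x)) := rel_apply hμG hxy
      exact key x (μ x) (μ (μ x)) hμx hμ2x hμ2μ hxy (rel_trans hxy h2)
    by_cases hy2 : y = μ (μ x)
    · subst hy2
      have h2 : rel G (μ x) (μ (μ (μ x))) := rel_apply hμG hxy
      rw [h3app] at h2
      exact key x (μ x) (μ (μ x)) hμx hμ2x hμ2μ (rel_symm h2) hxy
    · -- y is fixed by μ
      have hμy : μ y = y := by
        by_contra h
        have : y ∈ μ.support := Equiv.Perm.mem_support.2 h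
        rw [hsup_eq] at this
        simp only [Finset.mem_insert, Finset.mem_singleton] at this
        rcases this with h' | h' | h'
        · exact hyx h'
        · exact hy1 h'
        · exact hy2 h'
      have h2 : rel G (μ x) y := by
        have := rel_apply hμG hxy
        rwa [hμy] at this
      exact key y x (μ x) (Ne.symm hyx) (fun h => hy1 h.symm) hμx (rel_symm hxy) (rel_symm h2)
  -- the two fixed points of σ
  have hcompl : σ.supportᶜ.card = 2 := by
    rw [Finset.card_compl, Fintype.card_fin, hσs]
    omega
  obtain ⟨u, v, huv, hsuv⟩ := Finset.card_eq_two.mp hcompl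
  have hu : σ u = u := by
    have : u ∈ σ.supportᶜ := by rw [hsuv]; simp
    rw [Finset.mem_compl, Equiv.Perm.notMem_support] at this
    exact this
  have hv : σ v = v := by
    have : v ∈ σ.supportᶜ := by rw [hsuv]; simp
    rw [Finset.mem_compl, Equiv.Perm.notMem_support] at this
    exact this
  have hfix : ∀ y : Fin n, y ∉ σ.support → y = u ∨ y = v := by
    intro y hy
    have : y ∈ σ.supportᶜ := Finset.mem_compl.2 hy
    rw [hsuv] at this
    simpa using this
  -- Lemma A : if some support point is related to its image, the whole support is one class
  have lemA : ∀ x ∈ σ.support, rel G x (σ x) → ∀ y ∈ σ.support, rel G x y := by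
    intro x hx hrx y hy
    obtain ⟨k, hk⟩ := hσc.exists_pow_eq (Equiv.Perm.mem_support.mp hx)
      (Equiv.Perm.mem_support.mp hy)
    have hpow : ∀ m : ℕ, rel G x ((σ ^ m) x) := by
      intro m
      induction m with
      | zero => simpa using rel_refl G x
      | succ m ih =>
        have hstep : rel G ((σ ^ m) x) ((σ ^ m) (σ x)) := rel_apply (pow_mem hσG m) hrx
        have heq : (σ ^ m) (σ x) = (σ ^ (m + 1)) x := by
          simp [pow_succ, Equiv.Perm.mul_apply]
        rw [heq] at hstep
        exact rel_trans ih hstep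
    rw [← hk]
    exact hpow k
  -- main case split
  have htot : ∀ y z : Fin n, rel G y z := by
    by_cases hc : ∃ x ∈ σ.support, rel G x (σ x)
    · obtain ⟨x, hx, hrx⟩ := hc
      have hsub : σ.support ⊆ cl G x := fun y hy => mem_cl.2 (lemA x hx hrx y hy)
      have hbig : n - 2 ≤ (cl G x).card := by
        rw [← hσs]; exact Finset.card_le_card hsub
      have hrel_fix : ∀ w : Fin n, w ∉ σ.support → rel G x w := by
        intro w hw
        by_contra hxw
        apply hB w
        have hdisj : Disjoint (cl G x) (cl G w) := by
          rw [Finset.disjoint_left]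
          intro z hz hz'
          exact hxw (rel_trans (mem_cl.1 hz) (rel_symm (mem_cl.1 hz')))
        have : (cl G x).card + (cl G w).card ≤ n := by
          rw [← Finset.card_union_of_disjoint hdisj]
          calc ((cl G x) ∪ (cl G w)).card ≤ (Finset.univ : Finset (Fin n)).card :=
                Finset.card_le_card (Finset.subset_univ _)
            _ = n := by rw [Finset.card_univ, Fintype.card_fin]
        omega
      have hxall : ∀ y : Fin n, rel G x y := by
        intro y
        by_cases hy : y ∈ σ.support
        · exact mem_cl.1 (hsub hy)
        · exact hrel_fix y hy
      intro y z
      exact rel_trans (rel_symm (hxall y)) (hxall z)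
    · push_neg at hc
      exfalso
      apply hB u
      have hsub : cl G u ⊆ {u, v} := by
        intro z hz
        have hz' : rel G u z := mem_cl.1 hz
        by_cases hzs : z ∈ σ.support
        · exfalso
          apply hc z hzs
          have h1 : rel G (σ u) (σ z) := rel_apply hσG hz'
          rw [hu] at h1
          exact rel_trans (rel_symm hz') h1
        · rcases hfix z hzs with rfl | rfl <;> simp
      calc (cl G u).card ≤ ({u, v} : Finset (Fin n)).card := Finset.card_le_card hsub
        _ = 2 := Finset.card_pair huv
  -- conclude
  rw [eq_top_iff, ← Equiv.Perm.closure_isSwap, Subgroup.closure_le]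
  rintro f ⟨p, q, hpq, rfl⟩
  rcases htot p q with rfl | h
  · exact absurd rfl hpq
  · exact h
end
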